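/- arXiv:2302.01912 — 3 statements merged into one kernel-verified Lean document; each statement's English description precedes it below -/
import Mathlib

section
/- The principal branch W₀ of the Lambert W function satisfies W₀(t) - (log t - log (log t)) → 0 as t → ∞. -/
/-!
Write `w = W₀(t)`, so `t = w e^w ≤ e^(2w)` and `w → ∞`. Then `log t = w + log w = w (1 + log w / w)`,
hence `W₀(t) - (log t - log log t) = log (1 + log w / w)`, which tends to `0` since `log w / w → 0`.
-/

open Real Filter Topology

lemma log_le_two_mul_of_mul_exp_eq {w t : ℝ} (ht : 0 < t) (h : w * exp w = t) :
    log t ≤ 2 * w := by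
  have hle : t ≤ exp (2 * w) := by
    rw [← h, two_mul, exp_add]
    gcongr
    linarith [add_one_le_exp w]
  simpa using log_le_log ht hle

lemma tendsto_atTop_of_mul_exp_eq {W : ℝ → ℝ}
    (hW : ∀ᶠ t in atTop, W t * exp (W t) = t) : Tendsto W atTop atTop := by
  refine tendsto_atTop_mono' atTop ?_ (tendsto_log_atTop.atTop_div_const two_pos)
  filter_upwards [hW, eventually_gt_atTop 0] with t hWt ht
  linarith [log_le_two_mul_of_mul_exp_eq ht hWt]

lemma sub_log_sub_log_log_mul_exp {w : ℝ} (hw : 1 ≤ w) :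
    w - (log (w * exp w) - log (log (w * exp w))) = log (1 + log w / w) := by
  have hw₀ : 0 < w := one_pos.trans_le hw
  have hpos : 0 < 1 + log w / w := by positivity [log_nonneg hw]
  have hlog : log (w * exp w) = w * (1 + log w / w) := by
    rw [log_mul hw₀.ne' (exp_ne_zero w), log_exp]
    field_simp
    ring
  rw [hlog, log_mul hw₀.ne' hpos.ne']
  field_simp
  ring

lemma tendsto_log_one_add_log_div_self :
    Tendsto (fun x : ℝ => log (1 + log x / x)) atTop (𝓝 0) := by
  have h : Tendsto (fun x : ℝ => 1 + log x / x) atTop (𝓝 1) := by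
    simpa using tendsto_const_nhds.add isLittleO_log_id_atTop.tendsto_div_nhds_zero
  simpa using h.log one_ne_zero

theorem lambertW_asymptotic (W : ℝ → ℝ)
    (hW : ∀ t : ℝ, 0 < t → 0 ≤ W t ∧ W t * Real.exp (W t) = t) :
    Tendsto (fun t => W t - (Real.log t - Real.log (Real.log t))) atTop (nhds 0) := by
  have hW' : ∀ᶠ t in atTop, W t * exp (W t) = t :=
    (eventually_gt_atTop 0).mono fun t ht => (hW t ht).2
  have hWtop := tendsto_atTop_of_mul_exp_eq hW'
  refine (tendsto_log_one_add_log_div_self.comp hWtop).congr' ?_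
  filter_upwards [hW', hWtop.eventually_ge_atTop 1] with t ht hw
  rw [Function.comp_apply, ← sub_log_sub_log_log_mul_exp hw, ht]
end

section
/- Any Stieltjes function t ↦ ∫₀^∞ ρ(u)/(t+u) du, where ρ : (0,∞) → [0,∞) is measurable with the integral finite for all t > 0, is completely monotone on (0,∞): it is smooth and (−1)ⁿ times its n-th derivative is nonnegative for all n. -/
open Real Set MeasureTheory Metric

section StieltjesAux

variable (ρ : ℝ → ℝ)

noncomputable def Fn (n : ℕ) (t : ℝ) : ℝ := ∫ u in Ioi (0:ℝ), ρ u / (t + u) ^ (n + 1)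

noncomputable def Gc (z : ℂ) : ℂ := ∫ u in Ioi (0:ℝ), (ρ u : ℂ) / (z + u)

lemma integrableFn (hρ : Measurable ρ) (hρnn : ∀ u : ℝ, 0 < u → 0 ≤ ρ u)
    (hint : ∀ t : ℝ, 0 < t → IntegrableOn (fun u => ρ u / (t + u)) (Ioi 0))
    (n : ℕ) {t : ℝ} (ht : 0 < t) :
    IntegrableOn (fun u => ρ u / (t + u) ^ (n + 1)) (Ioi 0) := by
  have hmeas : Measurable fun u => ρ u / (t + u) ^ (n + 1) :=
    hρ.div ((measurable_const.add measurable_id).pow_const _)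
  refine Integrable.mono' (((hint t ht).const_mul ((t ^ n)⁻¹))) hmeas.aestronglyMeasurable ?_
  rw [ae_restrict_iff' measurableSet_Ioi]
  refine ae_of_all _ fun u hu => ?_
  have hu0 : (0:ℝ) < u := hu
  have htu : (0:ℝ) < t + u := by linarith
  have h1 : t ^ n * (t + u) ≤ (t + u) ^ (n + 1) := by
    rw [pow_succ]
    gcongr <;> linarith
  rw [Real.norm_eq_abs, abs_of_nonneg (div_nonneg (hρnn u hu0) (by positivity)),
    show (t ^ n)⁻¹ * (ρ u / (t + u)) = ρ u / (t ^ n * (t + u)) by field_simp]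
  gcongr
  exact hρnn u hu0

lemma integrableGc (hρ : Measurable ρ) (hρnn : ∀ u : ℝ, 0 < u → 0 ≤ ρ u)
    (hint : ∀ t : ℝ, 0 < t → IntegrableOn (fun u => ρ u / (t + u)) (Ioi 0))
    {z : ℂ} (hz : 0 < z.re) :
    IntegrableOn (fun u : ℝ => (ρ u : ℂ) / (z + u)) (Ioi 0) := by
  have hmeas : Measurable fun u : ℝ => (ρ u : ℂ) / (z + u) :=
    (Complex.measurable_ofReal.comp hρ).div
      (measurable_const.add Complex.measurable_ofReal)
  refine Integrable.mono' ((hint z.re hz)) hmeas.aestronglyMeasurable ?_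
  rw [ae_restrict_iff' measurableSet_Ioi]
  refine ae_of_all _ fun u hu => ?_
  have hu0 : (0:ℝ) < u := hu
  have htu : (0:ℝ) < z.re + u := by linarith
  rw [norm_div, Complex.norm_real, Real.norm_eq_abs, abs_of_nonneg (hρnn u hu0)]
  have hre : z.re + u ≤ ‖z + u‖ := by
    have := Complex.re_le_norm (z + u)
    simpa [Complex.add_re] using this
  gcongr <;> first | exact hρnn u hu0 | linarith

lemma diffGc (hρ : Measurable ρ) (hρnn : ∀ u : ℝ, 0 < u → 0 ≤ ρ u)
    (hint : ∀ t : ℝ, 0 < t → IntegrableOn (fun u => ρ u / (t + u)) (Ioi 0))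
    {z₀ : ℂ} (hz : 0 < z₀.re) :
    DifferentiableAt ℂ (Gc ρ) z₀ := by
  have hmeas : ∀ z : ℂ, AEStronglyMeasurable (fun u : ℝ => (ρ u : ℂ) / (z + u))
      (volume.restrict (Ioi (0:ℝ))) := fun z =>
    ((Complex.measurable_ofReal.comp hρ).div
      (measurable_const.add Complex.measurable_ofReal)).aestronglyMeasurable
  have hb : Integrable (fun u => ρ u / (z₀.re / 2 + u) ^ 2) (volume.restrict (Ioi (0:ℝ))) :=
    integrableFn ρ hρ hρnn hint 1 (half_pos hz)
  have hi : Integrable (fun u : ℝ => (ρ u : ℂ) / (z₀ + u)) (volume.restrict (Ioi (0:ℝ))) :=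
    integrableGc ρ hρ hρnn hint hz
  have key := hasDerivAt_integral_of_dominated_loc_of_deriv_le
    (μ := volume.restrict (Ioi (0:ℝ)))
    (F := fun (z : ℂ) (u : ℝ) => (ρ u : ℂ) / (z + u))
    (F' := fun (z : ℂ) (u : ℝ) => -((ρ u : ℂ) / (z + u) ^ 2))
    (x₀ := z₀) (bound := fun u => ρ u / (z₀.re / 2 + u) ^ 2)
    (ball_mem_nhds z₀ (half_pos hz)) (Filter.Eventually.of_forall hmeas)
    hi
    (((((Complex.measurable_ofReal.comp hρ).div
      ((measurable_const.add Complex.measurable_ofReal).pow_const 2)).neg).aestronglyMeasurable))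
    ?_ hb ?_
  · exact key.2.differentiableAt
  · rw [ae_restrict_iff' measurableSet_Ioi]
    refine ae_of_all _ fun u hu z hz' => ?_
    have hu0 : (0:ℝ) < u := hu
    have hzre : z₀.re / 2 < z.re := by
      have h1 : |(z - z₀).re| ≤ ‖z - z₀‖ := Complex.abs_re_le_norm _
      have h2 : ‖z - z₀‖ < z₀.re / 2 := mem_ball_iff_norm.1 hz'
      have := abs_lt.1 (lt_of_le_of_lt h1 h2)
      simp only [Complex.sub_re] at this
      linarith [this.1]
    have hre : z₀.re / 2 + u ≤ ‖z + u‖ := by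
      have := Complex.re_le_norm (z + u)
      simp only [Complex.add_re, Complex.ofReal_re] at this
      calc z₀.re / 2 + u ≤ z.re + u := by linarith
        _ ≤ ‖z + u‖ := by simpa using this
    rw [norm_neg, norm_div, Complex.norm_real, Real.norm_eq_abs, abs_of_nonneg (hρnn u hu0),
      norm_pow]
    have hpos : (0:ℝ) < (z₀.re / 2 + u) ^ 2 := by
      have : (0:ℝ) < z₀.re / 2 + u := by linarith
      positivity
    have h4 : (z₀.re / 2 + u) ^ 2 ≤ ‖z + u‖ ^ 2 := by
      have h5 : (0:ℝ) ≤ z₀.re / 2 + u := by linarith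
      exact pow_le_pow_left₀ h5 hre 2
    exact div_le_div_of_nonneg_left (hρnn u hu0) hpos h4
  · rw [ae_restrict_iff' measurableSet_Ioi]
    refine ae_of_all _ fun u hu z hz' => ?_
    have hu0 : (0:ℝ) < u := hu
    have hzre : z₀.re / 2 < z.re := by
      have h1 : |(z - z₀).re| ≤ ‖z - z₀‖ := Complex.abs_re_le_norm _
      have h2 : ‖z - z₀‖ < z₀.re / 2 := mem_ball_iff_norm.1 hz'
      have := abs_lt.1 (lt_of_le_of_lt h1 h2)
      simp only [Complex.sub_re] at this
      linarith [this.1]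
    have hne : z + u ≠ 0 := by
      intro h
      have : (z + u).re = 0 := by rw [h]; simp
      simp only [Complex.add_re, Complex.ofReal_re] at this
      linarith
    have hg : HasDerivAt (fun z : ℂ => z + (u:ℂ)) 1 z := (hasDerivAt_id z).add_const _
    have := (hasDerivAt_const z ((ρ u : ℂ))).div hg hne
    convert this using 1
    · rfl
    · rfl
    field_simp
    all_goals ring

lemma hasDerivFn (hρ : Measurable ρ) (hρnn : ∀ u : ℝ, 0 < u → 0 ≤ ρ u)
    (hint : ∀ t : ℝ, 0 < t → IntegrableOn (fun u => ρ u / (t + u)) (Ioi 0))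
    (n : ℕ) {t : ℝ} (ht : 0 < t) :
    HasDerivAt (Fn ρ n) (-(n+1 : ℝ) * Fn ρ (n+1) t) t := by
  have hmeas : ∀ x : ℝ, AEStronglyMeasurable (fun u => ρ u / (x + u) ^ (n + 1))
      (volume.restrict (Ioi (0:ℝ))) := fun x =>
    (hρ.div ((measurable_const.add measurable_id).pow_const _)).aestronglyMeasurable
  have hb : Integrable (fun u => (n+1 : ℝ) * (ρ u / (t/2 + u) ^ (n + 2)))
      (volume.restrict (Ioi (0:ℝ))) :=
    (integrableFn ρ hρ hρnn hint (n+1) (half_pos ht)).const_mul _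
  have hi : Integrable (fun u => ρ u / (t + u) ^ (n + 1)) (volume.restrict (Ioi (0:ℝ))) :=
    integrableFn ρ hρ hρnn hint n ht
  have key := hasDerivAt_integral_of_dominated_loc_of_deriv_le (μ := volume.restrict (Ioi 0))
    (F := fun x u => ρ u / (x + u) ^ (n + 1))
    (F' := fun x u => -(n+1 : ℝ) * (ρ u / (x + u) ^ (n + 2)))
    (x₀ := t) (bound := fun u => (n+1 : ℝ) * (ρ u / (t/2 + u) ^ (n + 2)))
    (ball_mem_nhds t (half_pos ht)) (Filter.Eventually.of_forall hmeas)
    hi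
    ((((hρ.div ((measurable_const.add measurable_id).pow_const _)).const_mul
      _).aestronglyMeasurable))
    ?_ hb ?_
  · have := key.2
    simp only [Fn, integral_const_mul] at this ⊢
    exact this
  · rw [ae_restrict_iff' measurableSet_Ioi]
    refine ae_of_all _ fun u hu x hx => ?_
    have hu0 : (0:ℝ) < u := hu
    have hx2 : t/2 < x := by
      have := abs_lt.1 (mem_ball_iff_norm.1 hx); linarith [this.1]
    have h2 : (0:ℝ) < t/2 + u := by linarith
    have h3 : (0:ℝ) < x + u := by linarith
    rw [norm_mul, norm_neg, Real.norm_eq_abs, Real.norm_eq_abs,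
      abs_of_nonneg (by positivity : (0:ℝ) ≤ (n:ℝ)+1),
      abs_of_nonneg (div_nonneg (hρnn u hu0) (by positivity))]
    have hd : ρ u / (x + u) ^ (n + 2) ≤ ρ u / (t/2 + u) ^ (n + 2) := by
      gcongr <;> first | exact hρnn u hu0 | linarith
    exact mul_le_mul_of_nonneg_left hd (by positivity)
  · rw [ae_restrict_iff' measurableSet_Ioi]
    refine ae_of_all _ fun u hu x hx => ?_
    have hu0 : (0:ℝ) < u := hu
    have hx2 : t/2 < x := by
      have := abs_lt.1 (mem_ball_iff_norm.1 hx); linarith [this.1]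
    have h3 : (0:ℝ) < x + u := by linarith
    have hg : HasDerivAt (fun x : ℝ => (x + u) ^ (n + 1))
        ((n+1 : ℕ) * (x + u) ^ n * 1) x := ((hasDerivAt_id x).add_const u).pow (n+1)
    have := (hasDerivAt_const x (ρ u)).div hg (by positivity)
    convert this using 1
    · rfl
    · rfl
    have hne : x + u ≠ 0 := ne_of_gt h3
    field_simp
    push_cast
    ring

end StieltjesAux

theorem stieltjes_is_completely_monotone (ρ : ℝ → ℝ)
    (hρ : Measurable ρ) (hρnn : ∀ u : ℝ, 0 < u → 0 ≤ ρ u)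
    (hint : ∀ t : ℝ, 0 < t → IntegrableOn (fun u => ρ u / (t + u)) (Ioi 0)) :
    ContDiffOn ℝ (⊤ : ℕ∞) (fun t => ∫ u in Ioi (0:ℝ), ρ u / (t + u)) (Ioi 0) ∧
    ∀ n : ℕ, ∀ t ∈ Ioi (0:ℝ),
      0 ≤ (-1 : ℝ) ^ n *
        iteratedDerivWithin n (fun t => ∫ u in Ioi (0:ℝ), ρ u / (t + u)) (Ioi 0) t := by
  set f := fun t => ∫ u in Ioi (0:ℝ), ρ u / (t + u) with hf
  have hfg : ∀ t ∈ Ioi (0:ℝ), (Complex.reCLM ∘ Gc ρ ∘ Complex.ofRealCLM) t = f t := by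
    intro t ht
    have ht0 : (0:ℝ) < t := ht
    have hI := integral_re (μ := volume.restrict (Ioi (0:ℝ)))
      (f := fun u : ℝ => (ρ u : ℂ) / ((t:ℂ) + u))
      (integrableGc ρ hρ hρnn hint (by simpa using ht0))
    simp only [Function.comp, Gc, hf, Complex.ofRealCLM_apply, Complex.reCLM_apply]
    have hI' : (∫ u in Ioi (0:ℝ), (ρ u : ℂ) / ((t:ℂ) + u)).re
        = ∫ u in Ioi (0:ℝ), ((ρ u : ℂ) / ((t:ℂ) + u)).re := hI.symm
    rw [hI']
    refine setIntegral_congr_fun measurableSet_Ioi fun u hu => ?_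
    have : ((ρ u : ℂ) / ((t:ℂ) + u)) = ((ρ u / (t + u) : ℝ) : ℂ) := by push_cast; ring
    rw [this, Complex.ofReal_re]
  have hopen : IsOpen {z : ℂ | 0 < z.re} := isOpen_lt continuous_const Complex.continuous_re
  have hdG : DifferentiableOn ℂ (Gc ρ) {z : ℂ | 0 < z.re} :=
    fun z hz => (diffGc ρ hρ hρnn hint hz).differentiableWithinAt
  have hanG : AnalyticOnNhd ℂ (Gc ρ) {z : ℂ | 0 < z.re} := hdG.analyticOnNhd hopen
  have hanf : AnalyticOnNhd ℝ f (Ioi 0) := by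
    intro t ht
    have ht0 : (0:ℝ) < t := ht
    have h1 : AnalyticAt ℂ (Gc ρ) ((t:ℝ) : ℂ) := hanG _ (by simpa using ht0)
    have h2 : AnalyticAt ℝ (Gc ρ) ((t:ℝ) : ℂ) := h1.restrictScalars
    have h3 : AnalyticAt ℝ (Complex.reCLM ∘ Gc ρ ∘ Complex.ofRealCLM) t :=
      ((Complex.reCLM.analyticAt _).comp h2).comp (Complex.ofRealCLM.analyticAt t)
    exact h3.congr (Filter.eventuallyEq_of_mem (isOpen_Ioi.mem_nhds ht) hfg)
  have hf0 : ∀ t ∈ Ioi (0:ℝ), f t = Fn ρ 0 t := by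
    intro t ht; simp [Fn, hf]
  have main : ∀ n : ℕ, ∀ t ∈ Ioi (0:ℝ),
      iteratedDerivWithin n f (Ioi 0) t = ((-1:ℝ)^n * n.factorial) * Fn ρ n t := by
    intro n
    induction n with
    | zero => intro t ht; simpa [iteratedDerivWithin_zero] using hf0 t ht
    | succ n ih =>
      intro t ht
      rw [iteratedDerivWithin_succ]
      have hcong : derivWithin (iteratedDerivWithin n f (Ioi 0)) (Ioi 0) t
          = derivWithin (fun x => ((-1:ℝ)^n * n.factorial) * Fn ρ n x) (Ioi 0) t :=
        derivWithin_congr ih (ih t ht)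
      rw [hcong, derivWithin_of_isOpen isOpen_Ioi ht]
      have hd : HasDerivAt (fun x => ((-1:ℝ)^n * n.factorial) * Fn ρ n x)
          (((-1:ℝ)^n * n.factorial) * (-(n+1:ℝ) * Fn ρ (n+1) t)) t :=
        (hasDerivFn ρ hρ hρnn hint n ht).const_mul _
      rw [hd.deriv]
      push_cast [pow_succ, Nat.factorial_succ]
      ring
  have hFnn : ∀ n : ℕ, ∀ t ∈ Ioi (0:ℝ), 0 ≤ Fn ρ n t := by
    intro n t ht
    refine setIntegral_nonneg measurableSet_Ioi fun u hu => ?_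
    have hu0 : (0:ℝ) < u := hu
    have htu : (0:ℝ) < t + u := by have : (0:ℝ) < t := ht; linarith
    exact div_nonneg (hρnn u hu0) (by positivity)
  refine ⟨hanf.contDiffOn (uniqueDiffOn_Ioi 0), ?_⟩
  intro n t ht
  rw [main n t ht]
  have h5 : (-1:ℝ)^n * ((-1:ℝ)^n * n.factorial * Fn ρ n t)
      = n.factorial * Fn ρ n t := by
    rw [← mul_assoc, ← mul_assoc, ← mul_pow]
    simp
  rw [h5]
  exact mul_nonneg (by positivity) (hFnn n t ht)
end

section
/- The function t ↦ W₀(t)/(t(1+W₀(t))) is decreasing on (0,∞), where W₀ is the principal branch of the Lambert W function. -/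
open Real Set

theorem lambertW_deriv_antitone (W : ℝ → ℝ)
    (hW : ∀ t : ℝ, 0 < t → 0 < W t ∧ W t * Real.exp (W t) = t) :
    AntitoneOn (fun t => W t / (t * (1 + W t))) (Ioi 0) := by
  intro a ha b hb hab
  simp only [mem_Ioi] at ha hb
  obtain ⟨hWa, hae⟩ := hW a ha
  obtain ⟨hWb, hbe⟩ := hW b hb
  have hWab : W a ≤ W b := by
    by_contra h
    push_neg at h
    have hexp : Real.exp (W b) < Real.exp (W a) := Real.exp_lt_exp.mpr h
    have : b < a := by
      rw [← hae, ← hbe]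
      nlinarith [Real.exp_pos (W a), Real.exp_pos (W b)]
    linarith
  have ha' : (fun t => W t / (t * (1 + W t))) a = 1 / (Real.exp (W a) * (1 + W a)) := by
    simp only
    rw [div_eq_div_iff (by positivity) (by positivity)]
    linear_combination (1 + W a) * hae
  have hb' : (fun t => W t / (t * (1 + W t))) b = 1 / (Real.exp (W b) * (1 + W b)) := by
    simp only
    rw [div_eq_div_iff (by positivity) (by positivity)]
    linear_combination (1 + W b) * hbe
  rw [ha', hb']
  apply one_div_le_one_div_of_le (by positivity)
  have h1 : Real.exp (W a) ≤ Real.exp (W b) := Real.exp_le_exp.mpr hWab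
  nlinarith [Real.exp_pos (W a)]
end
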